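/- arXiv:0901.2070 — 2 statements merged into one kernel-verified Lean document; each statement's English description precedes it below -/
import Mathlib

section
/- Gateaux derivative of the dual objective and the optimality inequality: let y > 0 and let ξ*, ξ' be nonnegative F-measurable random variables with E[ξ*·H] < ∞ and E[ξ'·H] < ∞. Setting ξ^{(ε)} := ε·ξ' + (1−ε)·ξ*, one has lim_{ε↓0} ε^{-1}( E[Ũ(y·ξ^{(ε)}(·),·)] − E[Ũ(y·ξ*(·),·)] ) = −y·E[ min(I(y·ξ*(·),·), H(·))·(ξ'(·) − ξ*(·)) ]. Consequently, if E[Ũ(y·ξ*(·),·)] ≤ E[Ũ(y·ξ^{(ε)}(·),·)] for every ε ∈ (0,1], then E[min(I(y·ξ*(·),·), H(·))·ξ'(·)] ≤ E[min(I(y·ξ*(·),·), H(·))·ξ*(·)]. -/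
open MeasureTheory Set Filter
open scoped ENNReal NNReal Topology

/-- The convex dual `Ũ(y) := sup_{0 ≤ z ≤ H} (U(z) − y·z)` (for a fixed state). -/
noncomputable def dualU (U : ℝ → ℝ) (H y : ℝ) : ℝ :=
  sSup ((fun z => U z - y * z) '' Set.Icc 0 H)

/-- `min(I(y), H)`, where `I(y) := inf{ z ∈ (0,H) : U'(z) < y }` with the
conventions `inf ∅ = +∞` and `I(0) = +∞` (so that the minimum with `H`
equals `H` in those cases). -/
noncomputable def IminU (U : ℝ → ℝ) (H y : ℝ) : ℝ :=
  sInf ({z | z ∈ Set.Ioo 0 H ∧ deriv U z < y} ∪ {H})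

/-!
Fix a state and write `Z(q) = min(I(q), H)`. Since `U'` is strictly decreasing on `(0, H)`, the
mean value theorem shows that `Z(q)` maximises `z ↦ U z - q z` on `[0, H]`, so
`Ũ(q) = U(Z(q)) - q Z(q)` and `Ũ(p) ≥ Ũ(q) - (p - q) Z(q)`. Strict monotonicity of `U'` also
rules out jumps of the antitone map `Z`; together with the subgradient inequality at `p` and at `q`
this makes `Ũ` differentiable with `Ũ' = -Z` and `H`-Lipschitz. The difference quotients of the
dual objective are then dominated by `y H |ξ' - ξ*|`, and dominated convergence gives the Gateaux
derivative. Under the optimality hypothesis these quotients are nonnegative, hence so is the limit.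
-/

section OneState

variable {f : ℝ → ℝ} {h q c : ℝ}

lemma bddBelow_IminU_set (f : ℝ → ℝ) (h q : ℝ) :
    BddBelow ({z | z ∈ Ioo 0 h ∧ deriv f z < q} ∪ {h}) :=
  ⟨min 0 h, by rintro z (⟨hz, -⟩ | rfl); exacts [min_le_of_left_le hz.1.le, min_le_right 0 z]⟩

lemma IminU_mem_Icc (hh : 0 ≤ h) : IminU f h q ∈ Icc 0 h :=
  ⟨le_csInf (by simp) (by rintro z (⟨hz, -⟩ | rfl); exacts [hz.1.le, hh]),
    csInf_le (bddBelow_IminU_set f h q) (by simp)⟩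

lemma IminU_le_of_deriv_lt (hc : c ∈ Ioo 0 h) (hcq : deriv f c < q) : IminU f h q ≤ c :=
  csInf_le (bddBelow_IminU_set f h q) (Or.inl ⟨hc, hcq⟩)

lemma deriv_ge_of_lt_IminU (hc : c ∈ Ioo 0 h) (hcq : c < IminU f h q) : q ≤ deriv f c :=
  le_of_not_gt fun hlt => (IminU_le_of_deriv_lt hc hlt).not_gt hcq

lemma deriv_lt_of_IminU_lt (hconc : StrictConcaveOn ℝ (Ioo 0 h) f)
    (hdiff : ∀ z ∈ Ioo 0 h, DifferentiableAt ℝ f z) (hc : c ∈ Ioo 0 h)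
    (hcq : IminU f h q < c) : deriv f c < q := by
  obtain ⟨w, ⟨hw, hwq⟩ | rfl, hwc⟩ := exists_lt_of_csInf_lt (by simp) hcq
  · exact (hconc.strictAntiOn_deriv hdiff hw hc hwc).trans hwq
  · exact absurd hc.2 hwc.not_gt

lemma continuous_IminU (hh : 0 ≤ h) (hconc : StrictConcaveOn ℝ (Ioo 0 h) f)
    (hdiff : ∀ z ∈ Ioo 0 h, DifferentiableAt ℝ f z) : Continuous (IminU f h) := by
  refine continuous_iff_continuousAt.2 fun q => tendsto_order.2 ⟨fun a ha => ?_, fun b hb => ?_⟩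
  · rcases lt_or_ge a 0 with ha0 | ha0
    · exact .of_forall fun q' => ha0.trans_le (IminU_mem_Icc hh).1
    obtain ⟨c₀, hac₀, hc₀⟩ := exists_between ha
    obtain ⟨c₁, hc₀₁, hc₁⟩ := exists_between hc₀
    have hZh := (IminU_mem_Icc (f := f) (q := q) hh).2
    have hc₀I : c₀ ∈ Ioo 0 h := ⟨ha0.trans_lt hac₀, hc₀.trans_le hZh⟩
    have hc₁I : c₁ ∈ Ioo 0 h := ⟨hc₀I.1.trans hc₀₁, hc₁.trans_le hZh⟩
    -- strict concavity makes `f'(c₀) > f'(c₁) ≥ q`, so `c₀` stays below `IminU` near `q`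
    have hq : q < deriv f c₀ :=
      (deriv_ge_of_lt_IminU hc₁I hc₁).trans_lt (hconc.strictAntiOn_deriv hdiff hc₀I hc₁I hc₀₁)
    filter_upwards [eventually_lt_nhds hq] with q' hq'
    refine hac₀.trans_le (le_csInf (by simp) ?_)
    rintro z (⟨hz, hzq⟩ | rfl)
    · exact le_of_not_gt fun hzc =>
        (hconc.strictAntiOn_deriv hdiff hz hc₀I hzc).not_gt (hzq.trans hq')
    · exact hc₀I.2.le
  · rcases lt_or_ge h b with hb0 | hbh
    · exact .of_forall fun q' => (IminU_mem_Icc hh).2.trans_lt hb0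
    obtain ⟨c, hZc, hcb⟩ := exists_between hb
    have hcI : c ∈ Ioo 0 h := ⟨(IminU_mem_Icc hh).1.trans_lt hZc, hcb.trans_le hbh⟩
    filter_upwards [eventually_gt_nhds (deriv_lt_of_IminU_lt hconc hdiff hcI hZc)] with q' hq'
    exact (IminU_le_of_deriv_lt hcI hq').trans_lt hcb

lemma exists_deriv_mul_sub_eq (hcont : ContinuousOn f (Icc 0 h))
    (hdiff : ∀ z ∈ Ioo 0 h, DifferentiableAt ℝ f z) {a b : ℝ} (ha : 0 ≤ a) (hab : a < b)
    (hb : b ≤ h) : ∃ c ∈ Ioo a b, deriv f c * (b - a) = f b - f a := by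
  obtain ⟨c, hc, hslope⟩ := exists_deriv_eq_slope f hab
    (hcont.mono (Icc_subset_Icc ha hb))
    (fun x hx => (hdiff x ⟨ha.trans_lt hx.1, hx.2.trans_le hb⟩).differentiableWithinAt)
  exact ⟨c, hc, by rw [hslope, div_mul_cancel₀ _ (sub_ne_zero.2 hab.ne')]⟩

lemma isGreatest_IminU (hh : 0 ≤ h) (hcont : ContinuousOn f (Icc 0 h))
    (hconc : StrictConcaveOn ℝ (Ioo 0 h) f) (hdiff : ∀ z ∈ Ioo 0 h, DifferentiableAt ℝ f z)
    (q : ℝ) :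
    IsGreatest ((fun z => f z - q * z) '' Icc 0 h) (f (IminU f h q) - q * IminU f h q) := by
  set Z := IminU f h q
  have hZ : Z ∈ Icc 0 h := IminU_mem_Icc hh
  refine ⟨⟨Z, hZ, rfl⟩, ?_⟩
  rintro _ ⟨z, hz, rfl⟩
  rcases lt_trichotomy z Z with hzZ | rfl | hZz
  · obtain ⟨c, hc, hcd⟩ := exists_deriv_mul_sub_eq hcont hdiff hz.1 hzZ hZ.2
    have := deriv_ge_of_lt_IminU ⟨hz.1.trans_lt hc.1, hc.2.trans_le hZ.2⟩ hc.2
    nlinarith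
  · exact le_rfl
  · obtain ⟨c, hc, hcd⟩ := exists_deriv_mul_sub_eq hcont hdiff hZ.1 hZz hz.2
    have := deriv_lt_of_IminU_lt hconc hdiff ⟨hZ.1.trans_lt hc.1, hc.2.trans_le hz.2⟩ hc.1
    nlinarith

lemma dualU_eq (hh : 0 ≤ h) (hcont : ContinuousOn f (Icc 0 h))
    (hconc : StrictConcaveOn ℝ (Ioo 0 h) f) (hdiff : ∀ z ∈ Ioo 0 h, DifferentiableAt ℝ f z)
    (q : ℝ) : dualU f h q = f (IminU f h q) - q * IminU f h q :=
  (isGreatest_IminU hh hcont hconc hdiff q).csSup_eq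

lemma dualU_sub_mul_IminU_le (hh : 0 ≤ h) (hcont : ContinuousOn f (Icc 0 h))
    (hconc : StrictConcaveOn ℝ (Ioo 0 h) f) (hdiff : ∀ z ∈ Ioo 0 h, DifferentiableAt ℝ f z)
    (p q : ℝ) : dualU f h q - (p - q) * IminU f h q ≤ dualU f h p := by
  have : f (IminU f h q) - p * IminU f h q ≤ dualU f h p :=
    le_csSup (isGreatest_IminU hh hcont hconc hdiff p).bddAbove ⟨_, IminU_mem_Icc hh, rfl⟩
  rw [dualU_eq hh hcont hconc hdiff q]
  linarith

lemma abs_dualU_sub_le (hh : 0 ≤ h) (hcont : ContinuousOn f (Icc 0 h))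
    (hconc : StrictConcaveOn ℝ (Ioo 0 h) f) (hdiff : ∀ z ∈ Ioo 0 h, DifferentiableAt ℝ f z)
    (p q : ℝ) : |dualU f h p - dualU f h q| ≤ h * |p - q| := by
  have hp := dualU_sub_mul_IminU_le hh hcont hconc hdiff p q
  have hq := dualU_sub_mul_IminU_le hh hcont hconc hdiff q p
  obtain ⟨hZp₀, hZph⟩ := IminU_mem_Icc (f := f) (q := p) hh
  obtain ⟨hZq₀, hZqh⟩ := IminU_mem_Icc (f := f) (q := q) hh
  rw [abs_le]
  constructor <;> nlinarith [le_abs_self (p - q), neg_abs_le (p - q)]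

lemma hasDerivAt_dualU (hh : 0 ≤ h) (hcont : ContinuousOn f (Icc 0 h))
    (hconc : StrictConcaveOn ℝ (Ioo 0 h) f) (hdiff : ∀ z ∈ Ioo 0 h, DifferentiableAt ℝ f z)
    (q : ℝ) : HasDerivAt (dualU f h) (-IminU f h q) q := by
  refine hasDerivAt_iff_isLittleO.2 (Asymptotics.isLittleO_iff.2 fun ε hε => ?_)
  filter_upwards [Metric.tendsto_nhds.1 ((continuous_IminU hh hconc hdiff).tendsto q) ε hε]
    with p hp
  have hp' := dualU_sub_mul_IminU_le hh hcont hconc hdiff p q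
  have hq' := dualU_sub_mul_IminU_le hh hcont hconc hdiff q p
  rw [Real.dist_eq] at hp
  rw [Real.norm_eq_abs, Real.norm_eq_abs, smul_eq_mul, abs_of_nonneg (by linarith)]
  -- the remainder lies between `0` and `(p - q) * (IminU f h q - IminU f h p)`
  calc dualU f h p - dualU f h q - (p - q) * -IminU f h q
      ≤ (p - q) * (IminU f h q - IminU f h p) := by linarith
    _ ≤ |p - q| * |IminU f h p - IminU f h q| := by
        rw [abs_sub_comm (IminU f h p), ← abs_mul]; exact le_abs_self _
    _ ≤ ε * |p - q| := by rw [mul_comm]; exact mul_le_mul_of_nonneg_right hp.le (abs_nonneg _)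

lemma tendsto_slope_dualU (hh : 0 ≤ h) (hcont : ContinuousOn f (Icc 0 h))
    (hconc : StrictConcaveOn ℝ (Ioo 0 h) f) (hdiff : ∀ z ∈ Ioo 0 h, DifferentiableAt ℝ f z)
    (q d : ℝ) :
    Tendsto (fun ε => (dualU f h (q + ε * d) - dualU f h q) / ε) (𝓝[>] 0)
      (𝓝 (-(IminU f h q * d))) := by
  have hline : HasDerivAt (fun ε => q + ε * d) d 0 := by
    simpa using ((hasDerivAt_id (0 : ℝ)).mul_const d).const_add q
  have := ((hasDerivAt_dualU hh hcont hconc hdiff q).comp_of_eq 0 hline (by simp))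
    |>.tendsto_slope_zero_right
  simpa [div_eq_inv_mul, neg_mul] using this

lemma dualU_eq_iSup_rat (hh : 0 ≤ h) (hcont : ContinuousOn f (Icc 0 h)) (q : ℝ) :
    dualU f h q = ⨆ r : ℚ, (f (min (max (r : ℝ) 0) h) - q * min (max (r : ℝ) 0) h) := by
  set clamp : ℝ → ℝ := fun x => min (max x 0) h
  have hclamp : range clamp = Icc 0 h := by
    refine Subset.antisymm ?_ fun z hz => ⟨z, by simp [clamp, hz.1, hz.2]⟩
    rintro _ ⟨x, rfl⟩
    exact ⟨le_min (le_max_right x 0) hh, min_le_right _ _⟩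
  have hg : Continuous fun x => f (clamp x) - q * clamp x := by
    have : Continuous clamp := by fun_prop
    exact (hcont.comp_continuous this fun x => hclamp ▸ mem_range_self x).sub
      (continuous_const.mul this)
  rw [dualU, ← hclamp, ← range_comp, ← iSup]
  exact (Rat.denseRange_cast.ciSup' hg).symm.trans (iSup_range' (fun x => f (clamp x) - q * clamp x) ((↑) : ℚ → ℝ))

lemma dualU_mem_Icc (hh : 0 ≤ h) (hmono : MonotoneOn f (Icc 0 h)) (hq : 0 ≤ q) :
    dualU f h q ∈ Icc (f 0) (f h) := by
  have hub : ∀ x ∈ (fun z => f z - q * z) '' Icc 0 h, x ≤ f h := by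
    rintro _ ⟨z, hz, rfl⟩
    nlinarith [hmono hz ⟨hh, le_rfl⟩ hz.2, hz.1]
  exact ⟨le_csSup_of_le ⟨f h, hub⟩ ⟨0, ⟨le_rfl, hh⟩, rfl⟩ (by simp),
    csSup_le ((nonempty_Icc.2 hh).image _) hub⟩

end OneState

section RandomState

variable {Ω : Type*} [MeasurableSpace Ω] {μ : Measure Ω} {H : Ω → ℝ} {U : Ω → ℝ → ℝ}

lemma measurable_dualU (hHmeas : Measurable H) (hH : ∀ ω, 0 ≤ H ω)
    (hUcont : ∀ ω, ContinuousOn (U ω) (Icc 0 (H ω)))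
    (hUcap : ∀ ω, ∀ w, 0 ≤ w → U ω w = U ω (min w (H ω)))
    (hUmeas : ∀ z, Measurable fun ω => U ω z) {q : Ω → ℝ} (hq : Measurable q) :
    Measurable fun ω => dualU (U ω) (H ω) (q ω) := by
  simp_rw [dualU_eq_iSup_rat (hH _) (hUcont _), ← hUcap _ _ (le_max_right _ _)]
  exact .iSup fun r => (hUmeas _).sub (hq.mul (measurable_const.min hHmeas))

-- `IminU` is the pointwise limit of the measurable slopes of `dualU`
lemma measurable_IminU (hH : ∀ ω, 0 ≤ H ω) (hUcont : ∀ ω, ContinuousOn (U ω) (Icc 0 (H ω)))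
    (hUconc : ∀ ω, StrictConcaveOn ℝ (Ioo 0 (H ω)) (U ω))
    (hUdiff : ∀ ω, ∀ z ∈ Ioo 0 (H ω), DifferentiableAt ℝ (U ω) z)
    (hD : ∀ g : Ω → ℝ, Measurable g → Measurable fun ω => dualU (U ω) (H ω) (g ω))
    {q : Ω → ℝ} (hq : Measurable q) :
    Measurable fun ω => IminU (U ω) (H ω) (q ω) := by
  have hε : Tendsto (fun n : ℕ => 1 / ((n : ℝ) + 1)) atTop (𝓝[>] 0) :=
    tendsto_nhdsWithin_of_tendsto_nhds_of_eventually_within _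
      tendsto_one_div_add_atTop_nhds_zero_nat (.of_forall fun n => by simp; positivity)
  have hlim := measurable_of_tendsto_metrizable' atTop
    (fun n => ((hD _ (hq.add_const _)).sub (hD q hq)).div_const _)
    (tendsto_pi_nhds.2 fun ω =>
      (tendsto_slope_dualU (hH ω) (hUcont ω) (hUconc ω) (hUdiff ω) (q ω) 1).comp hε)
  convert hlim.neg using 1
  ext ω
  simp

lemma integrable_dualU (hH : ∀ ω, 0 ≤ H ω) (hU0 : ∀ ω, 0 ≤ U ω 0)
    (hUmono : ∀ ω, MonotoneOn (U ω) (Icc 0 (H ω))) (hUint : Integrable (fun ω => U ω (H ω)) μ)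
    {q : Ω → ℝ} (hDq : Measurable fun ω => dualU (U ω) (H ω) (q ω)) (hq : ∀ ω, 0 ≤ q ω) :
    Integrable (fun ω => dualU (U ω) (H ω) (q ω)) μ := by
  refine hUint.mono hDq.aestronglyMeasurable (.of_forall fun ω => ?_)
  obtain ⟨hlo, hhi⟩ := dualU_mem_Icc (hH ω) (hUmono ω) (hq ω)
  rw [Real.norm_of_nonneg ((hU0 ω).trans hlo), Real.norm_of_nonneg ((hU0 ω).trans (hlo.trans hhi))]
  exact hhi

lemma integrable_IminU_mul (hH : ∀ ω, 0 ≤ H ω) {q ξ : Ω → ℝ}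
    (hZ : Measurable fun ω => IminU (U ω) (H ω) (q ω)) (hξ : Measurable ξ)
    (hξH : Integrable (fun ω => ξ ω * H ω) μ) :
    Integrable (fun ω => IminU (U ω) (H ω) (q ω) * ξ ω) μ := by
  refine hξH.mono (hZ.mul hξ).aestronglyMeasurable (.of_forall fun ω => ?_)
  obtain ⟨hZ₀, hZH⟩ := IminU_mem_Icc (f := U ω) (q := q ω) (hH ω)
  rw [norm_mul, norm_mul, mul_comm, Real.norm_of_nonneg hZ₀, Real.norm_of_nonneg (hH ω)]
  exact mul_le_mul_of_nonneg_left hZH (norm_nonneg _)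

lemma tendsto_integral_slope_dualU (hH : ∀ ω, 0 ≤ H ω)
    (hUcont : ∀ ω, ContinuousOn (U ω) (Icc 0 (H ω)))
    (hUconc : ∀ ω, StrictConcaveOn ℝ (Ioo 0 (H ω)) (U ω))
    (hUdiff : ∀ ω, ∀ z ∈ Ioo 0 (H ω), DifferentiableAt ℝ (U ω) z)
    (hD : ∀ g : Ω → ℝ, Measurable g → Measurable fun ω => dualU (U ω) (H ω) (g ω))
    {q d : Ω → ℝ} (hq : Measurable q) (hd : Measurable d)
    (hdH : Integrable (fun ω => d ω * H ω) μ) :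
    Tendsto (fun ε => ∫ ω, (dualU (U ω) (H ω) (q ω + ε * d ω) - dualU (U ω) (H ω) (q ω)) / ε ∂μ)
      (𝓝[>] 0) (𝓝 (∫ ω, -(IminU (U ω) (H ω) (q ω) * d ω) ∂μ)) := by
  refine tendsto_integral_filter_of_dominated_convergence (fun ω => ‖d ω * H ω‖)
    (.of_forall fun ε => ?_) ?_ hdH.norm
    (.of_forall fun ω => tendsto_slope_dualU (hH ω) (hUcont ω) (hUconc ω) (hUdiff ω) (q ω) (d ω))
  · exact (((hD _ (hq.add (hd.const_mul ε))).sub (hD q hq)).div_const ε).aestronglyMeasurable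
  filter_upwards [self_mem_nhdsWithin] with ε (hε : 0 < ε)
  refine .of_forall fun ω => ?_
  rw [norm_div, Real.norm_of_nonneg hε.le, div_le_iff₀ hε, Real.norm_eq_abs]
  calc _ ≤ H ω * |q ω + ε * d ω - q ω| :=
        abs_dualU_sub_le (hH ω) (hUcont ω) (hUconc ω) (hUdiff ω) _ _
    _ = ‖d ω * H ω‖ * ε := by
        rw [add_sub_cancel_left, abs_mul, abs_of_pos hε, norm_mul, Real.norm_of_nonneg (hH ω),
          Real.norm_eq_abs]
        ring

end RandomState

theorem stmt12_general {Ω : Type*} [MeasurableSpace Ω] (μ : Measure Ω)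
    (H : Ω → ℝ) (hHmeas : Measurable H) (hHpos : ∀ ω, 0 < H ω)
    (U : Ω → ℝ → ℝ)
    (hU0 : ∀ ω, ∀ z, 0 ≤ z → 0 ≤ U ω z)
    (hUmono : ∀ ω, MonotoneOn (U ω) (Set.Ici 0))
    (hUcont : ∀ ω, ContinuousOn (U ω) (Set.Ici 0))
    (hUconc : ∀ ω, StrictConcaveOn ℝ (Set.Ioo 0 (H ω)) (U ω))
    (hUdiff : ∀ ω, ∀ z ∈ Set.Ioo 0 (H ω), DifferentiableAt ℝ (U ω) z)
    (hUcap : ∀ ω, ∀ w, 0 ≤ w → U ω w = U ω (min w (H ω)))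
    (hUmeas : ∀ z, Measurable fun ω => U ω z)
    (hUint : Integrable (fun ω => U ω (H ω)) μ)
    (y : ℝ) (hy : 0 < y)
    (ξs ξ' : Ω → ℝ)
    (hξsmeas : Measurable ξs) (hξspos : ∀ ω, 0 ≤ ξs ω)
    (hξ'meas : Measurable ξ') (hξ'pos : ∀ ω, 0 ≤ ξ' ω)
    (hξsHint : Integrable (fun ω => ξs ω * H ω) μ)
    (hξ'Hint : Integrable (fun ω => ξ' ω * H ω) μ) :
    Tendsto
      (fun ε : ℝ =>
        ((∫ ω, dualU (U ω) (H ω) (y * (ε * ξ' ω + (1 - ε) * ξs ω)) ∂μ) -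
            ∫ ω, dualU (U ω) (H ω) (y * ξs ω) ∂μ) / ε)
      (nhdsWithin 0 (Set.Ioi 0))
      (nhds (-(y * ∫ ω, IminU (U ω) (H ω) (y * ξs ω) * (ξ' ω - ξs ω) ∂μ))) ∧
    ((∀ ε : ℝ, 0 < ε → ε ≤ 1 →
        (∫ ω, dualU (U ω) (H ω) (y * ξs ω) ∂μ) ≤
          ∫ ω, dualU (U ω) (H ω) (y * (ε * ξ' ω + (1 - ε) * ξs ω)) ∂μ) →
      (∫ ω, IminU (U ω) (H ω) (y * ξs ω) * ξ' ω ∂μ) ≤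
        ∫ ω, IminU (U ω) (H ω) (y * ξs ω) * ξs ω ∂μ) := by
  have hH : ∀ ω, 0 ≤ H ω := fun ω => (hHpos ω).le
  have hUcont' : ∀ ω, ContinuousOn (U ω) (Icc 0 (H ω)) :=
    fun ω => (hUcont ω).mono Icc_subset_Ici_self
  have hD : ∀ g : Ω → ℝ, Measurable g → Measurable fun ω => dualU (U ω) (H ω) (g ω) :=
    fun _ => measurable_dualU hHmeas hH hUcont' hUcap hUmeas
  have hZ := measurable_IminU hH hUcont' hUconc hUdiff hD (hξsmeas.const_mul y)
  have hDint : ∀ ε ∈ Icc (0 : ℝ) 1,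
      Integrable (fun ω => dualU (U ω) (H ω) (y * (ε * ξ' ω + (1 - ε) * ξs ω))) μ :=
    fun ε hε => integrable_dualU hH (fun ω => hU0 ω 0 le_rfl)
      (fun ω => (hUmono ω).mono Icc_subset_Ici_self) hUint (hD _ (by fun_prop)) fun ω =>
        mul_nonneg hy.le (add_nonneg (mul_nonneg hε.1 (hξ'pos ω))
          (mul_nonneg (sub_nonneg.2 hε.2) (hξspos ω)))
  have hslope := tendsto_integral_slope_dualU (q := fun ω => y * ξs ω)
    (d := fun ω => y * (ξ' ω - ξs ω)) hH hUcont' hUconc hUdiff hD (by fun_prop) (by fun_prop)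
    (by simpa only [Pi.sub_apply, mul_assoc, sub_mul] using (hξ'Hint.sub hξsHint).const_mul y)
  have hline : ∀ ε ω, y * ξs ω + ε * (y * (ξ' ω - ξs ω)) = y * (ε * ξ' ω + (1 - ε) * ξs ω) :=
    fun _ _ => by ring
  have hlimit : ∫ ω, -(IminU (U ω) (H ω) (y * ξs ω) * (y * (ξ' ω - ξs ω))) ∂μ =
      -(y * ∫ ω, IminU (U ω) (H ω) (y * ξs ω) * (ξ' ω - ξs ω) ∂μ) := by
    rw [← integral_const_mul, ← integral_neg]
    congr 1 with ω
    ring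
  simp_rw [hline, hlimit] at hslope
  have hderiv := hslope.congr' <| by
    filter_upwards [Ioo_mem_nhdsGT zero_lt_one] with ε hε
    have h0 := hDint 0 (by simp)
    simp only [zero_mul, sub_zero, one_mul, zero_add] at h0
    rw [integral_div, integral_sub (hDint ε (Ioo_subset_Icc_self hε)) h0]
  refine ⟨hderiv, fun hopt => ?_⟩
  have hslope_nonneg : 0 ≤ -(y * ∫ ω, IminU (U ω) (H ω) (y * ξs ω) * (ξ' ω - ξs ω) ∂μ) :=
    ge_of_tendsto hderiv <| by
      filter_upwards [Ioo_mem_nhdsGT zero_lt_one] with ε hε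
      exact div_nonneg (sub_nonneg.2 (hopt ε hε.1 hε.2.le)) hε.1.le
  have hsplit := integral_sub (integrable_IminU_mul hH hZ hξ'meas hξ'Hint)
    (integrable_IminU_mul hH hZ hξsmeas hξsHint)
  simp_rw [← mul_sub] at hsplit
  nlinarith

/-- Gateaux derivative of the dual objective along `ξ^{(ε)} := ε·ξ' + (1−ε)·ξ*`
and the resulting optimality inequality. -/
theorem stmt12 {Ω : Type*} [MeasurableSpace Ω] (μ : Measure Ω) [IsProbabilityMeasure μ]
    (H : Ω → ℝ) (hHmeas : Measurable H) (hHpos : ∀ ω, 0 < H ω)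
    (U : Ω → ℝ → ℝ)
    (hU0 : ∀ ω, ∀ z, 0 ≤ z → 0 ≤ U ω z)
    (hUmono : ∀ ω, MonotoneOn (U ω) (Set.Ici 0))
    (hUcont : ∀ ω, ContinuousOn (U ω) (Set.Ici 0))
    (hUconc : ∀ ω, StrictConcaveOn ℝ (Set.Ioo 0 (H ω)) (U ω))
    (hUdiff : ∀ ω, ∀ z ∈ Set.Ioo 0 (H ω), DifferentiableAt ℝ (U ω) z)
    (hUcap : ∀ ω, ∀ w, 0 ≤ w → U ω w = U ω (min w (H ω)))
    (hUmeas : ∀ z, Measurable fun ω => U ω z)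
    (hUint : Integrable (fun ω => U ω (H ω)) μ)
    (y : ℝ) (hy : 0 < y)
    (ξs ξ' : Ω → ℝ)
    (hξsmeas : Measurable ξs) (hξspos : ∀ ω, 0 ≤ ξs ω)
    (hξ'meas : Measurable ξ') (hξ'pos : ∀ ω, 0 ≤ ξ' ω)
    (hξsHint : Integrable (fun ω => ξs ω * H ω) μ)
    (hξ'Hint : Integrable (fun ω => ξ' ω * H ω) μ) :
    Tendsto
      (fun ε : ℝ =>
        ((∫ ω, dualU (U ω) (H ω) (y * (ε * ξ' ω + (1 - ε) * ξs ω)) ∂μ) -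
            ∫ ω, dualU (U ω) (H ω) (y * ξs ω) ∂μ) / ε)
      (nhdsWithin 0 (Set.Ioi 0))
      (nhds (-(y * ∫ ω, IminU (U ω) (H ω) (y * ξs ω) * (ξ' ω - ξs ω) ∂μ))) ∧
    ((∀ ε : ℝ, 0 < ε → ε ≤ 1 →
        (∫ ω, dualU (U ω) (H ω) (y * ξs ω) ∂μ) ≤
          ∫ ω, dualU (U ω) (H ω) (y * (ε * ξ' ω + (1 - ε) * ξs ω)) ∂μ) →
      (∫ ω, IminU (U ω) (H ω) (y * ξs ω) * ξ' ω ∂μ) ≤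
        ∫ ω, IminU (U ω) (H ω) (y * ξs ω) * ξs ω ∂μ) :=
  stmt12_general μ H hHmeas hHpos U hU0 hUmono hUcont hUconc hUdiff hUcap hUmeas hUint y hy ξs ξ'
    hξsmeas hξspos hξ'meas hξ'pos hξsHint hξ'Hint
end

section
/- Continuity of the dual objective along almost surely convergent sequences: let y > 0 and let (ξₙ)_{n≥1} be nonnegative F-measurable random variables converging almost surely to a random variable ξ. Then lim_{n→∞} E[Ũ(y·ξₙ(·),·)] = E[Ũ(y·ξ(·),·)]. -/
open MeasureTheory Set Filter
open scoped ENNReal NNReal Topology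

/-! The dual objective is dominated by `U(H)` and, for each state, `H`-Lipschitz in the dual
variable, so dominated convergence applies once the integrands are known to be measurable.
Measurability comes from writing `Ũ(y, ω)` as a countable supremum over rational points of
`(0, H(ω))`, which the continuity of `U(·, ω)` allows. -/

section DualU

variable {U : ℝ → ℝ} {H a b : ℝ}

lemma bddAbove_dualU_image (hmono : MonotoneOn U (Ici 0)) :
    BddAbove ((fun z => U z - a * z) '' Icc 0 H) := by
  refine ⟨U H + |a| * H, ?_⟩
  rintro _ ⟨z, ⟨hz0, hzH⟩, rfl⟩
  have hU : U z ≤ U H := hmono hz0 (hz0.trans hzH) hzH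
  have ha : -(a * z) ≤ |a| * H := by
    calc -(a * z) ≤ |a * z| := neg_le_abs _
      _ = |a| * z := by rw [abs_mul, abs_of_nonneg hz0]
      _ ≤ |a| * H := by gcongr
  dsimp only
  linarith

lemma sub_mul_le_dualU (hmono : MonotoneOn U (Ici 0)) {z : ℝ} (hz : z ∈ Icc 0 H) :
    U z - a * z ≤ dualU U H a :=
  le_csSup (bddAbove_dualU_image hmono) (mem_image_of_mem _ hz)

lemma dualU_le (hH : 0 ≤ H) (hmono : MonotoneOn U (Ici 0)) (ha : 0 ≤ a) :
    dualU U H a ≤ U H := by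
  refine csSup_le ((nonempty_Icc.2 hH).image _) ?_
  rintro _ ⟨z, ⟨hz0, hzH⟩, rfl⟩
  have hU : U z ≤ U H := hmono hz0 (hz0.trans hzH) hzH
  have haz : 0 ≤ a * z := mul_nonneg ha hz0
  dsimp only
  linarith

lemma norm_dualU_le (hH : 0 ≤ H) (hU0 : 0 ≤ U 0) (hmono : MonotoneOn U (Ici 0)) (ha : 0 ≤ a) :
    ‖dualU U H a‖ ≤ U H := by
  have hdual : U 0 - a * 0 ≤ dualU U H a := sub_mul_le_dualU hmono (left_mem_Icc.2 hH)
  rw [mul_zero, sub_zero] at hdual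
  rw [Real.norm_of_nonneg (hU0.trans hdual)]
  exact dualU_le hH hmono ha

lemma dualU_le_add (hH : 0 ≤ H) (hmono : MonotoneOn U (Ici 0)) :
    dualU U H a ≤ dualU U H b + H * dist a b := by
  refine csSup_le ((nonempty_Icc.2 hH).image _) ?_
  rintro _ ⟨z, ⟨hz0, hzH⟩, rfl⟩
  have hb : U z - b * z ≤ dualU U H b := sub_mul_le_dualU hmono ⟨hz0, hzH⟩
  have hab : (b - a) * z ≤ H * dist a b := by
    calc (b - a) * z ≤ |b - a| * z := by gcongr; exact le_abs_self _
      _ ≤ |b - a| * H := by gcongr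
      _ = H * dist a b := by rw [Real.dist_eq, abs_sub_comm, mul_comm]
  dsimp only
  linarith

lemma lipschitzWith_dualU (hH : 0 ≤ H) (hmono : MonotoneOn U (Ici 0)) :
    LipschitzWith H.toNNReal (dualU U H) :=
  .of_le_add_mul' H fun _ _ => dualU_le_add hH hmono

lemma dualU_eq_iSup_rat_s17 (hH : 0 < H) (hmono : MonotoneOn U (Ici 0))
    (hcont : ContinuousOn U (Ici 0)) :
    dualU U H a = ⨆ q : ℚ, if (q : ℝ) ∈ Ioo 0 H then U q - a * q else U 0 := by
  set F : ℚ → ℝ := fun q => if (q : ℝ) ∈ Ioo 0 H then U q - a * q else U 0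
  have hF : ∀ q, ∃ z ∈ Icc 0 H, U z - a * z = F q := by
    intro q
    by_cases hq : (q : ℝ) ∈ Ioo 0 H
    · exact ⟨q, Ioo_subset_Icc_self hq, by simp only [F, if_pos hq]⟩
    · exact ⟨0, left_mem_Icc.2 hH.le, by simp only [F, if_neg hq, mul_zero, sub_zero]⟩
  have hbdd : BddAbove (range F) :=
    (bddAbove_dualU_image hmono).mono <| range_subset_iff.2 hF
  refine le_antisymm (csSup_le ((nonempty_Icc.2 hH.le).image _) ?_)
    (ciSup_le fun q => ?_)
  · rintro _ ⟨z, hz, rfl⟩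
    -- rational points of `(0, H)` are dense in `[0, H]`, and `U z - a z` is continuous there
    have hz' : z ∈ closure (Ioo 0 H ∩ range ((↑) : ℚ → ℝ)) := by
      rw [← closure_Ioo hH.ne] at hz
      exact closure_minimal (Rat.denseRange_cast.open_subset_closure_inter isOpen_Ioo)
        isClosed_closure hz
    have hcont' : ContinuousWithinAt (fun z => U z - a * z) (Ioo 0 H ∩ range ((↑) : ℚ → ℝ)) z :=
      ((hcont.mono Icc_subset_Ici_self).sub
        (continuousOn_const.mul continuousOn_id) z hz).mono
        (inter_subset_left.trans Ioo_subset_Icc_self)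
    refine closure_minimal ?_ isClosed_Iic (hcont'.mem_closure_image hz')
    rintro _ ⟨_, ⟨hq, q, rfl⟩, rfl⟩
    calc U q - a * q = F q := by simp only [F, if_pos hq]
      _ ≤ ⨆ q, F q := le_ciSup hbdd q
  · obtain ⟨z, hz, hzq⟩ := hF q
    exact hzq ▸ sub_mul_le_dualU hmono hz

end DualU

section Measurable

variable {Ω : Type*} [MeasurableSpace Ω] {H : Ω → ℝ} {U : Ω → ℝ → ℝ} {g : Ω → ℝ}

lemma measurable_dualU_s17 (hHmeas : Measurable H) (hHpos : ∀ ω, 0 < H ω)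
    (hUmono : ∀ ω, MonotoneOn (U ω) (Ici 0)) (hUcont : ∀ ω, ContinuousOn (U ω) (Ici 0))
    (hUmeas : ∀ z, Measurable fun ω => U ω z) (hg : Measurable g) :
    Measurable fun ω => dualU (U ω) (H ω) (g ω) := by
  simp_rw [dualU_eq_iSup_rat_s17 (hHpos _) (hUmono _) (hUcont _)]
  refine .iSup fun q => Measurable.ite ?_ ((hUmeas q).sub (hg.mul_const _)) (hUmeas 0)
  exact (MeasurableSet.const _).inter (measurableSet_lt measurable_const hHmeas)

end Measurable

theorem stmt17_general {Ω : Type*} [MeasurableSpace Ω] (μ : Measure Ω) [IsProbabilityMeasure μ]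
    (H : Ω → ℝ) (hHmeas : Measurable H) (hHpos : ∀ ω, 0 < H ω)
    (U : Ω → ℝ → ℝ)
    (hU0 : ∀ ω, ∀ z, 0 ≤ z → 0 ≤ U ω z)
    (hUmono : ∀ ω, MonotoneOn (U ω) (Set.Ici 0))
    (hUcont : ∀ ω, ContinuousOn (U ω) (Set.Ici 0))
    (hUmeas : ∀ z, Measurable fun ω => U ω z)
    (hUint : Integrable (fun ω => U ω (H ω)) μ)
    (y : ℝ) (hy : 0 < y)
    (ξn : ℕ → Ω → ℝ) (hξnmeas : ∀ n, Measurable (ξn n))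
    (hξnpos : ∀ n ω, 0 ≤ ξn n ω)
    (ξ : Ω → ℝ)
    (hconv : ∀ᵐ ω ∂μ, Tendsto (fun n => ξn n ω) atTop (nhds (ξ ω))) :
    Tendsto (fun n => ∫ ω, dualU (U ω) (H ω) (y * ξn n ω) ∂μ) atTop
      (nhds (∫ ω, dualU (U ω) (H ω) (y * ξ ω) ∂μ)) := by
  refine tendsto_integral_of_dominated_convergence (fun ω => U ω (H ω))
    (fun n => (measurable_dualU_s17 hHmeas hHpos hUmono hUcont hUmeas
      ((hξnmeas n).const_mul y)).aestronglyMeasurable) hUint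
    (fun n => .of_forall fun ω => norm_dualU_le (hHpos ω).le (hU0 ω 0 le_rfl) (hUmono ω)
      (mul_nonneg hy.le (hξnpos n ω))) ?_
  filter_upwards [hconv] with ω hω
  exact ((lipschitzWith_dualU (hHpos ω).le (hUmono ω)).continuous.tendsto _).comp
    (hω.const_mul y)

/-- Continuity of the dual objective along almost surely convergent sequences:
if `ξₙ → ξ` a.s., then `E[Ũ(y·ξₙ(·),·)] → E[Ũ(y·ξ(·),·)]`. -/
theorem stmt17 {Ω : Type*} [MeasurableSpace Ω] (μ : Measure Ω) [IsProbabilityMeasure μ]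
    (H : Ω → ℝ) (hHmeas : Measurable H) (hHpos : ∀ ω, 0 < H ω)
    (U : Ω → ℝ → ℝ)
    (hU0 : ∀ ω, ∀ z, 0 ≤ z → 0 ≤ U ω z)
    (hUmono : ∀ ω, MonotoneOn (U ω) (Set.Ici 0))
    (hUcont : ∀ ω, ContinuousOn (U ω) (Set.Ici 0))
    (hUconc : ∀ ω, StrictConcaveOn ℝ (Set.Ioo 0 (H ω)) (U ω))
    (hUdiff : ∀ ω, ∀ z ∈ Set.Ioo 0 (H ω), DifferentiableAt ℝ (U ω) z)
    (hUcap : ∀ ω, ∀ w, 0 ≤ w → U ω w = U ω (min w (H ω)))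
    (hUmeas : ∀ z, Measurable fun ω => U ω z)
    (hUint : Integrable (fun ω => U ω (H ω)) μ)
    (y : ℝ) (hy : 0 < y)
    (ξn : ℕ → Ω → ℝ) (hξnmeas : ∀ n, Measurable (ξn n))
    (hξnpos : ∀ n ω, 0 ≤ ξn n ω)
    (ξ : Ω → ℝ)
    (hconv : ∀ᵐ ω ∂μ, Tendsto (fun n => ξn n ω) atTop (nhds (ξ ω))) :
    Tendsto (fun n => ∫ ω, dualU (U ω) (H ω) (y * ξn n ω) ∂μ) atTop
      (nhds (∫ ω, dualU (U ω) (H ω) (y * ξ ω) ∂μ)) :=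
  stmt17_general μ H hHmeas hHpos U hU0 hUmono hUcont hUmeas hUint y hy ξn hξnmeas hξnpos ξ hconv
end
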